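/- Second-order solvability condition yielding the characteristic-value correction β = 1/(2(g²−1)): let g be a real number with g ∉ {1, −1, 2, −2}. Define p(α) := −cos((g+2)α)/(4(g+1)) + cos((g−2)α)/(4(g−1)) and p₁(α) := cos((g+4)α)/(32(g+1)(g+2)) + cos((g−4)α)/(32(g−1)(g−2)). Then for every real α: p₁''(α) + g²·p₁(α) − 2·cos(2α)·p(α) + cos(gα)/(2(g²−1)) = 0. -/

import Mathlib

/-!
Each mode `cos (k α)` is an eigenfunction of `d²/dα² + g²` with eigenvalue `g² - k²`; for
`k = g ± 4` this is `∓8 (g ± 2)`, which cancels the factor `g ± 2` in the coefficients of `p₁`.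
By product-to-sum, `2 cos 2α · p` consists of the modes `g + 4`, `g - 4` (matching those of
`p₁'' + g² p₁`) and the resonant mode `g` with coefficient `1/(4(g-1)) - 1/(4(g+1))
= 1/(2(g² - 1))`, which is exactly `β`.
-/

open Real

/-- The first-order correction `p` in Mathieu's expansion of the even periodic
solution `P₂ = cos gα + h²p + h⁴p₁ + ⋯`. -/
noncomputable def mathieuCorrectionP (g : ℝ) (α : ℝ) : ℝ :=
  -Real.cos ((g + 2) * α) / (4 * (g + 1)) + Real.cos ((g - 2) * α) / (4 * (g - 1))

/-- The second-order correction `p₁` in Mathieu's expansion of the even periodic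
solution `P₂ = cos gα + h²p + h⁴p₁ + ⋯`. -/
noncomputable def mathieuCorrectionP1 (g : ℝ) (α : ℝ) : ℝ :=
  Real.cos ((g + 4) * α) / (32 * (g + 1) * (g + 2)) +
    Real.cos ((g - 4) * α) / (32 * (g - 1) * (g - 2))

theorem hasDerivAt_cos_mul (k x : ℝ) :
    HasDerivAt (fun x => cos (k * x)) (-(k * sin (k * x))) x := by
  simpa [mul_comm] using ((hasDerivAt_id x).const_mul k).cos

theorem hasDerivAt_sin_mul (k x : ℝ) :
    HasDerivAt (fun x => sin (k * x)) (k * cos (k * x)) x := by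
  simpa [mul_comm] using ((hasDerivAt_id x).const_mul k).sin

theorem deriv_deriv_cos_mul_div_add_cos_mul_div (k m a b : ℝ) :
    deriv (deriv fun x => cos (k * x) / a + cos (m * x) / b) =
      fun x => -(k ^ 2 * cos (k * x)) / a + -(m ^ 2 * cos (m * x)) / b := by
  have hderiv : deriv (fun x => cos (k * x) / a + cos (m * x) / b) =
      fun x => -(k * sin (k * x)) / a + -(m * sin (m * x)) / b :=
    funext fun x =>
      (((hasDerivAt_cos_mul k x).div_const a).add ((hasDerivAt_cos_mul m x).div_const b)).deriv
  funext x
  have hderiv2 : HasDerivAt (fun x => -(k * sin (k * x)) / a + -(m * sin (m * x)) / b)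
      (-(k * (k * cos (k * x))) / a + -(m * (m * cos (m * x))) / b) x :=
    (((hasDerivAt_sin_mul k x).const_mul k).neg.div_const a).add
      (((hasDerivAt_sin_mul m x).const_mul m).neg.div_const b)
  rw [hderiv, hderiv2.deriv]
  ring

theorem deriv_deriv_mathieuCorrectionP1_add {g : ℝ} (hg2 : g ≠ 2) (hg2' : g ≠ -2) (α : ℝ) :
    deriv (deriv (mathieuCorrectionP1 g)) α + g ^ 2 * mathieuCorrectionP1 g α =
      -cos ((g + 4) * α) / (4 * (g + 1)) + cos ((g - 4) * α) / (4 * (g - 1)) := by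
  have hsub : g - 2 ≠ 0 := sub_ne_zero.2 hg2
  have hadd : g + 2 ≠ 0 := by rwa [← sub_neg_eq_add, sub_ne_zero]
  unfold mathieuCorrectionP1
  rw [deriv_deriv_cos_mul_div_add_cos_mul_div]
  field_simp
  ring

theorem two_mul_cos_two_mul_mathieuCorrectionP (g α : ℝ) :
    2 * cos (2 * α) * mathieuCorrectionP g α =
      -(cos (g * α) + cos ((g + 4) * α)) / (4 * (g + 1)) +
        (cos ((g - 4) * α) + cos (g * α)) / (4 * (g - 1)) := by
  calc 2 * cos (2 * α) * mathieuCorrectionP g α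
      = -(2 * cos ((g + 2) * α) * cos (2 * α)) / (4 * (g + 1)) +
          2 * cos ((g - 2) * α) * cos (2 * α) / (4 * (g - 1)) := by
        rw [mathieuCorrectionP]; ring
    _ = _ := by
        rw [two_mul_cos_mul_cos, two_mul_cos_mul_cos]
        ring_nf

/-- second-order solvability condition yielding the
characteristic-value correction `β = 1/(2(g²−1))`. -/
theorem mathieu_second_order_solvability
    (g : ℝ) (hg1 : g ≠ 1) (hg2 : g ≠ -1) (hg3 : g ≠ 2) (hg4 : g ≠ -2) :
    ∀ α : ℝ,
      deriv (deriv (mathieuCorrectionP1 g)) α + g ^ 2 * mathieuCorrectionP1 g α -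
          2 * Real.cos (2 * α) * mathieuCorrectionP g α +
          Real.cos (g * α) / (2 * (g ^ 2 - 1)) = 0 := by
  intro α
  have hsub : g - 1 ≠ 0 := sub_ne_zero.2 hg1
  have hadd : g + 1 ≠ 0 := by rwa [← sub_neg_eq_add, sub_ne_zero]
  have hsq : g ^ 2 - 1 ≠ 0 := by
    rw [show g ^ 2 - 1 = (g - 1) * (g + 1) by ring]
    exact mul_ne_zero hsub hadd
  rw [deriv_deriv_mathieuCorrectionP1_add hg3 hg4, two_mul_cos_two_mul_mathieuCorrectionP]
  field_simp
  ring
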